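/- The so_3 R-matrix R(u,v) = I⊗I + cP/(u-v) - cQ/(u-v+c/2) with N=3 satisfies the Yang–Baxter equation R₁₂(u,v) R₁₃(u,w) R₂₃(v,w) = R₂₃(v,w) R₁₃(u,w) R₁₂(u,v) on ℂ³⊗ℂ³⊗ℂ³, for generic pairwise distinct spectral parameters u, v, w. -/

import Mathlib

open Matrix Kronecker

noncomputable def soP3 : Matrix (Fin 3 × Fin 3) (Fin 3 × Fin 3) ℂ :=
  ∑ i : Fin 3, ∑ j : Fin 3, Matrix.single i j (1 : ℂ) ⊗ₖ Matrix.single j i (1 : ℂ)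

noncomputable def soQ3 : Matrix (Fin 3 × Fin 3) (Fin 3 × Fin 3) ℂ :=
  ∑ i : Fin 3, ∑ j : Fin 3,
    Matrix.single i j (1 : ℂ) ⊗ₖ Matrix.single i.rev j.rev (1 : ℂ)

/-- The so₃ R-matrix R(u,v) = I⊗I + cP/(u-v) - cQ/(u-v+c/2). -/
noncomputable def soR3 (c u v : ℂ) : Matrix (Fin 3 × Fin 3) (Fin 3 × Fin 3) ℂ :=
  1 + (c / (u - v)) • soP3 - (c / (u - v + c / 2)) • soQ3

/-- R acting in factors 1 and 2 of ℂ³⊗ℂ³⊗ℂ³. -/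
noncomputable def R12 (c u v : ℂ) : Matrix (Fin 3 × Fin 3 × Fin 3) (Fin 3 × Fin 3 × Fin 3) ℂ :=
  Matrix.of fun p q =>
    soR3 c u v (p.1, p.2.1) (q.1, q.2.1) * (if p.2.2 = q.2.2 then 1 else 0)

/-- R acting in factors 1 and 3. -/
noncomputable def R13 (c u v : ℂ) : Matrix (Fin 3 × Fin 3 × Fin 3) (Fin 3 × Fin 3 × Fin 3) ℂ :=
  Matrix.of fun p q =>
    soR3 c u v (p.1, p.2.2) (q.1, q.2.2) * (if p.2.1 = q.2.1 then 1 else 0)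

/-- R acting in factors 2 and 3. -/
noncomputable def R23 (c u v : ℂ) : Matrix (Fin 3 × Fin 3 × Fin 3) (Fin 3 × Fin 3 × Fin 3) ℂ :=
  Matrix.of fun p q =>
    soR3 c u v (p.2.1, p.2.2) (q.2.1, q.2.2) * (if p.1 = q.1 then 1 else 0)

set_option maxHeartbeats 4000000
set_option maxRecDepth 100000

namespace YBaux

abbrev T3 := Fin 3 × Fin 3 × Fin 3

def zA : Matrix T3 T3 ℤ := Matrix.of fun p q => if p.1 = q.2.1 ∧ p.2.1 = q.1 ∧ p.2.2 = q.2.2 then 1 else 0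

def zB : Matrix T3 T3 ℤ := Matrix.of fun p q => if p.1 = q.2.2 ∧ p.2.2 = q.1 ∧ p.2.1 = q.2.1 then 1 else 0

def zC : Matrix T3 T3 ℤ := Matrix.of fun p q => if p.2.1 = q.2.2 ∧ p.2.2 = q.2.1 ∧ p.1 = q.1 then 1 else 0

def zX : Matrix T3 T3 ℤ := Matrix.of fun p q => if p.2.1 = Fin.rev p.1 ∧ q.2.1 = Fin.rev q.1 ∧ p.2.2 = q.2.2 then 1 else 0

def zY : Matrix T3 T3 ℤ := Matrix.of fun p q => if p.2.2 = Fin.rev p.1 ∧ q.2.2 = Fin.rev q.1 ∧ p.2.1 = q.2.1 then 1 else 0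

def zZ : Matrix T3 T3 ℤ := Matrix.of fun p q => if p.2.2 = Fin.rev p.2.1 ∧ q.2.2 = Fin.rev q.2.1 ∧ p.1 = q.1 then 1 else 0

def zAB : Matrix T3 T3 ℤ := Matrix.of fun p q => if p.1 = q.2.1 ∧ p.2.1 = q.2.2 ∧ p.2.2 = q.1 then 1 else 0

def zAC : Matrix T3 T3 ℤ := Matrix.of fun p q => if p.1 = q.2.2 ∧ p.2.2 = q.2.1 ∧ p.2.1 = q.1 then 1 else 0

def zAY : Matrix T3 T3 ℤ := Matrix.of fun p q => if p.2.2 = Fin.rev p.2.1 ∧ q.2.2 = Fin.rev q.1 ∧ p.1 = q.2.1 then 1 else 0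

def zAZ : Matrix T3 T3 ℤ := Matrix.of fun p q => if p.2.2 = Fin.rev p.1 ∧ q.2.2 = Fin.rev q.2.1 ∧ p.2.1 = q.1 then 1 else 0

def zXB : Matrix T3 T3 ℤ := Matrix.of fun p q => if p.2.1 = Fin.rev p.1 ∧ q.2.1 = Fin.rev q.2.2 ∧ p.2.2 = q.1 then 1 else 0

def zXY : Matrix T3 T3 ℤ := Matrix.of fun p q => if p.2.1 = Fin.rev p.1 ∧ q.2.2 = Fin.rev q.1 ∧ q.2.1 = p.2.2 then 1 else 0

def zYC : Matrix T3 T3 ℤ := Matrix.of fun p q => if p.2.2 = Fin.rev p.1 ∧ q.2.1 = Fin.rev q.1 ∧ p.2.1 = q.2.2 then 1 else 0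

def zZB : Matrix T3 T3 ℤ := Matrix.of fun p q => if p.2.2 = Fin.rev p.2.1 ∧ q.1 = Fin.rev q.2.1 ∧ p.1 = q.2.2 then 1 else 0

noncomputable def phi : Matrix T3 T3 ℤ →+* Matrix T3 T3 ℂ :=
  (Int.castRingHom ℂ).mapMatrix

noncomputable def cA : Matrix T3 T3 ℂ := phi zA
noncomputable def cB : Matrix T3 T3 ℂ := phi zB
noncomputable def cC : Matrix T3 T3 ℂ := phi zC
noncomputable def cX : Matrix T3 T3 ℂ := phi zX
noncomputable def cY : Matrix T3 T3 ℂ := phi zY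
noncomputable def cZ : Matrix T3 T3 ℂ := phi zZ
noncomputable def cAB : Matrix T3 T3 ℂ := phi zAB
noncomputable def cAC : Matrix T3 T3 ℂ := phi zAC
noncomputable def cAY : Matrix T3 T3 ℂ := phi zAY
noncomputable def cAZ : Matrix T3 T3 ℂ := phi zAZ
noncomputable def cXB : Matrix T3 T3 ℂ := phi zXB
noncomputable def cXY : Matrix T3 T3 ℂ := phi zXY
noncomputable def cYC : Matrix T3 T3 ℂ := phi zYC
noncomputable def cZB : Matrix T3 T3 ℂ := phi zZB

lemma mAB : cA * cB = cAB := by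
  show phi zA * phi zB = phi zAB
  rw [← _root_.map_mul]; exact congrArg phi (by decide)

lemma mAC : cA * cC = cAC := by
  show phi zA * phi zC = phi zAC
  rw [← _root_.map_mul]; exact congrArg phi (by decide)

lemma mAY : cA * cY = cAY := by
  show phi zA * phi zY = phi zAY
  rw [← _root_.map_mul]; exact congrArg phi (by decide)

lemma mAZ : cA * cZ = cAZ := by
  show phi zA * phi zZ = phi zAZ
  rw [← _root_.map_mul]; exact congrArg phi (by decide)

lemma mXB : cX * cB = cXB := by
  show phi zX * phi zB = phi zXB
  rw [← _root_.map_mul]; exact congrArg phi (by decide)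

lemma mXY : cX * cY = cXY := by
  show phi zX * phi zY = phi zXY
  rw [← _root_.map_mul]; exact congrArg phi (by decide)

lemma mYC : cY * cC = cYC := by
  show phi zY * phi zC = phi zYC
  rw [← _root_.map_mul]; exact congrArg phi (by decide)

lemma mZB : cZ * cB = cZB := by
  show phi zZ * phi zB = phi zZB
  rw [← _root_.map_mul]; exact congrArg phi (by decide)

lemma mXC : cX * cC = cXY := by
  show phi zX * phi zC = phi zXY
  rw [← _root_.map_mul]; exact congrArg phi (by decide)

lemma mXZ : cX * cZ = cXB := by
  show phi zX * phi zZ = phi zXB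
  rw [← _root_.map_mul]; exact congrArg phi (by decide)

lemma mBC : cB * cC = cAB := by
  show phi zB * phi zC = phi zAB
  rw [← _root_.map_mul]; exact congrArg phi (by decide)

lemma mBZ : cB * cZ = cXB := by
  show phi zB * phi zZ = phi zXB
  rw [← _root_.map_mul]; exact congrArg phi (by decide)

lemma mYZ : cY * cZ = cAZ := by
  show phi zY * phi zZ = phi zAZ
  rw [← _root_.map_mul]; exact congrArg phi (by decide)

lemma mCB : cC * cB = cAC := by
  show phi zC * phi zB = phi zAC
  rw [← _root_.map_mul]; exact congrArg phi (by decide)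

lemma mCY : cC * cY = cXY := by
  show phi zC * phi zY = phi zXY
  rw [← _root_.map_mul]; exact congrArg phi (by decide)

lemma mZY : cZ * cY = cAY := by
  show phi zZ * phi zY = phi zAY
  rw [← _root_.map_mul]; exact congrArg phi (by decide)

lemma mCA : cC * cA = cAB := by
  show phi zC * phi zA = phi zAB
  rw [← _root_.map_mul]; exact congrArg phi (by decide)

lemma mCX : cC * cX = cYC := by
  show phi zC * phi zX = phi zYC
  rw [← _root_.map_mul]; exact congrArg phi (by decide)

lemma mZA : cZ * cA = cAY := by
  show phi zZ * phi zA = phi zAY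
  rw [← _root_.map_mul]; exact congrArg phi (by decide)

lemma mZX : cZ * cX = cZB := by
  show phi zZ * phi zX = phi zZB
  rw [← _root_.map_mul]; exact congrArg phi (by decide)

lemma mBA : cB * cA = cAC := by
  show phi zB * phi zA = phi zAC
  rw [← _root_.map_mul]; exact congrArg phi (by decide)

lemma mBX : cB * cX = cZB := by
  show phi zB * phi zX = phi zZB
  rw [← _root_.map_mul]; exact congrArg phi (by decide)

lemma mYA : cY * cA = cAZ := by
  show phi zY * phi zA = phi zAZ
  rw [← _root_.map_mul]; exact congrArg phi (by decide)

lemma mYX : cY * cX = cYC := by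
  show phi zY * phi zX = phi zYC
  rw [← _root_.map_mul]; exact congrArg phi (by decide)

lemma tABC : cAB * cC = cB := by
  show phi zAB * phi zC = phi zB
  rw [← _root_.map_mul]; exact congrArg phi (by decide)

lemma tABZ : cAB * cZ = cXB := by
  show phi zAB * phi zZ = phi zXB
  rw [← _root_.map_mul]; exact congrArg phi (by decide)

lemma tAYC : cAY * cC = cZB := by
  show phi zAY * phi zC = phi zZB
  rw [← _root_.map_mul]; exact congrArg phi (by decide)

lemma tAYZ : cAY * cZ = cZ := by
  show phi zAY * phi zZ = phi zZ
  rw [← _root_.map_mul]; exact congrArg phi (by decide)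

lemma tXBC : cXB * cC = cXB := by
  show phi zXB * phi zC = phi zXB
  rw [← _root_.map_mul]; exact congrArg phi (by decide)

lemma tXBZ : cXB * cZ = cXB + cXB + cXB := by
  show phi zXB * phi zZ = phi zXB + phi zXB + phi zXB
  rw [← _root_.map_add, ← _root_.map_add, ← _root_.map_mul]; exact congrArg phi (by decide)

lemma tXYC : cXY * cC = cX := by
  show phi zXY * phi zC = phi zX
  rw [← _root_.map_mul]; exact congrArg phi (by decide)

lemma tXYZ : cXY * cZ = cXB := by
  show phi zXY * phi zZ = phi zXB
  rw [← _root_.map_mul]; exact congrArg phi (by decide)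

lemma tACA : cAC * cA = cB := by
  show phi zAC * phi zA = phi zB
  rw [← _root_.map_mul]; exact congrArg phi (by decide)

lemma tZBA : cZB * cA = cZB := by
  show phi zZB * phi zA = phi zZB
  rw [← _root_.map_mul]; exact congrArg phi (by decide)

lemma tXYA : cXY * cA = cXB := by
  show phi zXY * phi zA = phi zXB
  rw [← _root_.map_mul]; exact congrArg phi (by decide)

lemma tAYA : cAY * cA = cZ := by
  show phi zAY * phi zA = phi zZ
  rw [← _root_.map_mul]; exact congrArg phi (by decide)

lemma tACX : cAC * cX = cZB := by
  show phi zAC * phi zX = phi zZB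
  rw [← _root_.map_mul]; exact congrArg phi (by decide)

lemma tZBX : cZB * cX = cZB + cZB + cZB := by
  show phi zZB * phi zX = phi zZB + phi zZB + phi zZB
  rw [← _root_.map_add, ← _root_.map_add, ← _root_.map_mul]; exact congrArg phi (by decide)

lemma tXYX : cXY * cX = cX := by
  show phi zXY * phi zX = phi zX
  rw [← _root_.map_mul]; exact congrArg phi (by decide)

lemma tAYX : cAY * cX = cZB := by
  show phi zAY * phi zX = phi zZB
  rw [← _root_.map_mul]; exact congrArg phi (by decide)

lemma soP3_apply (a b d f : Fin 3) :
    soP3 (a, b) (d, f) = if a = f ∧ b = d then 1 else 0 := by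
  simp only [soP3, Matrix.sum_apply, Matrix.kroneckerMap_apply, Matrix.single,
    Matrix.of_apply, Pi.single_apply, ite_mul, zero_mul, one_mul, mul_ite, mul_zero, mul_one]
  fin_cases a <;> fin_cases b <;> fin_cases d <;> fin_cases f <;>
    simp [Fin.sum_univ_three]

lemma soQ3_apply (a b d f : Fin 3) :
    soQ3 (a, b) (d, f) = if b = Fin.rev a ∧ f = Fin.rev d then 1 else 0 := by
  simp only [soQ3, Matrix.sum_apply, Matrix.kroneckerMap_apply, Matrix.single,
    Matrix.of_apply, Pi.single_apply, ite_mul, zero_mul, one_mul, mul_ite, mul_zero, mul_one]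
  fin_cases a <;> fin_cases b <;> fin_cases d <;> fin_cases f <;>
    simp [Fin.sum_univ_three, Fin.rev]

lemma R12_eq (c u v : ℂ) :
    R12 c u v = 1 + (c / (u - v)) • cA - (c / (u - v + c / 2)) • cX := by
  ext p q
  obtain ⟨a, b, e⟩ := p; obtain ⟨d, f, g⟩ := q
  simp only [R12, Matrix.of_apply, soR3, Matrix.sub_apply, Matrix.add_apply, Matrix.smul_apply,
    Matrix.one_apply, soP3_apply, soQ3_apply, smul_eq_mul, cA, cX, phi,
    RingHom.mapMatrix_apply, Matrix.map_apply, zA, zX, Prod.mk.injEq, Int.coe_castRingHom, Int.cast_ite,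
    Int.cast_one, Int.cast_zero]
  split_ifs <;> first | ring1 | tauto

lemma R13_eq (c u v : ℂ) :
    R13 c u v = 1 + (c / (u - v)) • cB - (c / (u - v + c / 2)) • cY := by
  ext p q
  obtain ⟨a, b, e⟩ := p; obtain ⟨d, f, g⟩ := q
  simp only [R13, Matrix.of_apply, soR3, Matrix.sub_apply, Matrix.add_apply, Matrix.smul_apply,
    Matrix.one_apply, soP3_apply, soQ3_apply, smul_eq_mul, cB, cY, phi,
    RingHom.mapMatrix_apply, Matrix.map_apply, zB, zY, Prod.mk.injEq, Int.coe_castRingHom, Int.cast_ite,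
    Int.cast_one, Int.cast_zero]
  split_ifs <;> first | ring1 | tauto

lemma R23_eq (c u v : ℂ) :
    R23 c u v = 1 + (c / (u - v)) • cC - (c / (u - v + c / 2)) • cZ := by
  ext p q
  obtain ⟨a, b, e⟩ := p; obtain ⟨d, f, g⟩ := q
  simp only [R23, Matrix.of_apply, soR3, Matrix.sub_apply, Matrix.add_apply, Matrix.smul_apply,
    Matrix.one_apply, soP3_apply, soQ3_apply, smul_eq_mul, cC, cZ, phi,
    RingHom.mapMatrix_apply, Matrix.map_apply, zC, zZ, Prod.mk.injEq, Int.coe_castRingHom, Int.cast_ite,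
    Int.cast_one, Int.cast_zero]
  split_ifs <;> first | ring1 | tauto

lemma smul3 {a b d : ℂ} {M N P : Matrix T3 T3 ℂ} :
    ((a • M) * (b • N)) * (d • P) = (a * b * d) • ((M * N) * P) := by
  simp only [smul_mul_assoc, mul_smul_comm, smul_smul]
  congr 1
  ring

end YBaux

open YBaux in
theorem soR3_yang_baxter (c u v w : ℂ) (hc : c ≠ 0)
    (huv : u ≠ v) (huw : u ≠ w) (hvw : v ≠ w)
    (huv' : u - v + c / 2 ≠ 0) (huw' : u - w + c / 2 ≠ 0) (hvw' : v - w + c / 2 ≠ 0) :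
    R12 c u v * R13 c u w * R23 c v w = R23 c v w * R13 c u w * R12 c u v := by
  have h1 : u - v ≠ 0 := sub_ne_zero.mpr huv
  have h2 : u - w ≠ 0 := sub_ne_zero.mpr huw
  have h3 : v - w ≠ 0 := sub_ne_zero.mpr hvw
  have s1 : (u - v) * (u - v + c / 2) * (c / (u - v)) = c * (u - v + c / 2) := by
    rw [mul_comm (u - v) (u - v + c / 2), mul_assoc, mul_div_cancel₀ c h1]; ring
  have s1' : (u - v) * (u - v + c / 2) * (c / (u - v + c / 2)) = c * (u - v) := by
    rw [mul_assoc, mul_div_cancel₀ c huv']; ring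
  have s2 : (u - w) * (u - w + c / 2) * (c / (u - w)) = c * (u - w + c / 2) := by
    rw [mul_comm (u - w) (u - w + c / 2), mul_assoc, mul_div_cancel₀ c h2]; ring
  have s2' : (u - w) * (u - w + c / 2) * (c / (u - w + c / 2)) = c * (u - w) := by
    rw [mul_assoc, mul_div_cancel₀ c huw']; ring
  have s3 : (v - w) * (v - w + c / 2) * (c / (v - w)) = c * (v - w + c / 2) := by
    rw [mul_comm (v - w) (v - w + c / 2), mul_assoc, mul_div_cancel₀ c h3]; ring
  have s3' : (v - w) * (v - w + c / 2) * (c / (v - w + c / 2)) = c * (v - w) := by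
    rw [mul_assoc, mul_div_cancel₀ c hvw']; ring
  have hD : ((u - v) * (u - v + c / 2)) * ((u - w) * (u - w + c / 2)) *
      ((v - w) * (v - w + c / 2)) ≠ 0 :=
    mul_ne_zero (mul_ne_zero (mul_ne_zero h1 huv') (mul_ne_zero h2 huw'))
      (mul_ne_zero h3 hvw')
  refine smul_right_injective
    (Matrix (Fin 3 × Fin 3 × Fin 3) (Fin 3 × Fin 3 × Fin 3) ℂ) hD ?_
  show (((u - v) * (u - v + c / 2)) * ((u - w) * (u - w + c / 2)) *
      ((v - w) * (v - w + c / 2))) • (R12 c u v * R13 c u w * R23 c v w) =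
    (((u - v) * (u - v + c / 2)) * ((u - w) * (u - w + c / 2)) *
      ((v - w) * (v - w + c / 2))) • (R23 c v w * R13 c u w * R12 c u v)
  rw [R12_eq c u v, R13_eq c u w, R23_eq c v w]
  conv_lhs => rw [← smul3]
  conv_rhs => rw [show ((u - v) * (u - v + c / 2)) * ((u - w) * (u - w + c / 2)) *
      ((v - w) * (v - w + c / 2)) = ((v - w) * (v - w + c / 2)) *
      ((u - w) * (u - w + c / 2)) * ((u - v) * (u - v + c / 2)) from by ring, ← smul3]
  simp only [smul_add, smul_sub, smul_smul, s1, s1', s2, s2', s3, s3']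
  simp only [mul_add, add_mul, mul_sub, sub_mul, one_mul, mul_one,
    smul_mul_assoc, mul_smul_comm, smul_smul,
    mAB, mAC, mAY, mAZ, mXB, mXY, mYC, mZB, mXC, mXZ, mBC, mBZ, mYZ, mCB, mCY, mZY,
    mCA, mCX, mZA, mZX, mBA, mBX, mYA, mYX,
    tABC, tABZ, tAYC, tAYZ, tXBC, tXBZ, tXYC, tXYZ,
    tACA, tZBA, tXYA, tAYA, tACX, tZBX, tXYX, tAYX]
  match_scalars <;> ring1
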